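/- arXiv:1407.8334 — 2 statements merged into one kernel-verified Lean document; each statement's English description precedes it below -/
import Mathlib

section
/- Let 0 < θ ≤ 1/2. For every n, every positive semidefinite n×n complex matrix x, and every n×n complex matrix b with operator norm ‖b‖_∞ ≤ 1, one has trace((bᴴ x^{2θ} b)^{1/(2θ)}) ≤ trace(bᴴ x b). -/
open Matrix
open scoped ComplexOrder

/-- The absolute value `|A| = (Aᴴ A)^{1/2}` of a complex matrix. -/
noncomputable def matAbs {n : ℕ} (A : Matrix (Fin n) (Fin n) ℂ) : Matrix (Fin n) (Fin n) ℂ :=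
  (Matrix.posSemidef_conjTranspose_mul_self A).1.eigenvectorUnitary.1 *
    diagonal ((↑) ∘ (√·) ∘ (Matrix.posSemidef_conjTranspose_mul_self A).1.eigenvalues) *
    (star (Matrix.posSemidef_conjTranspose_mul_self A).1.eigenvectorUnitary : Matrix (Fin n) (Fin n) ℂ)

/-- Real power of a (Hermitian) matrix via the continuous functional calculus:
for positive semidefinite matrices this applies `t ↦ t ^ r` to the eigenvalues. -/
noncomputable def matPow {n : ℕ} (A : Matrix (Fin n) (Fin n) ℂ) (r : ℝ) :
    Matrix (Fin n) (Fin n) ℂ :=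
  cfc (fun t : ℝ => t ^ r) A

/-- The Schatten `r`-(quasi)norm `(trace |A|^r)^{1/r}`. -/
noncomputable def schattenNorm {n : ℕ} (r : ℝ) (A : Matrix (Fin n) (Fin n) ℂ) : ℝ :=
  ((matPow (matAbs A) r).trace).re ^ (1 / r)

/-- The operator norm of a matrix acting on `ℂⁿ`. -/
noncomputable def opNorm {n : ℕ} (A : Matrix (Fin n) (Fin n) ℂ) : ℝ :=
  ‖Matrix.toEuclideanCLM (𝕜 := ℂ) A‖

/-!
Diagonalise `M = bᴴ x^{2θ} b` in an orthonormal eigenbasis `(u_i)`. Each eigenvalue of `M` is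
`μ_i = ⟪b u_i, x^{2θ} b u_i⟫`; expanding `b u_i` in an eigenbasis `(e_k)` of `x` (eigenvalues `ξ_k`)
gives `μ_i = ∑ₖ |⟪e_k, b u_i⟫|² ξ_k^{2θ}`, a combination whose weights sum to `‖b u_i‖² ≤ 1`.
Since `t ↦ t^{1/(2θ)}` is convex and vanishes at `0`, Jensen's inequality for such sub-probability
weights gives `μ_i^{1/(2θ)} ≤ ∑ₖ |⟪e_k, b u_i⟫|² ξ_k = ⟪b u_i, x b u_i⟫`, and summing over `i`
yields `trace (bᴴ x b)`.
-/

open scoped InnerProductSpace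

theorem Real.rpow_sum_mul_le_sum_mul_rpow {ι : Type*} (s : Finset ι) {p : ℝ} (hp : 1 ≤ p)
    {w f : ι → ℝ} (hw : ∀ i, 0 ≤ w i) (hf : ∀ i, 0 ≤ f i) (hw1 : ∑ i ∈ s, w i ≤ 1) :
    (∑ i ∈ s, w i * f i) ^ p ≤ ∑ i ∈ s, w i * f i ^ p := by
  have hWf : 0 ≤ ∑ i ∈ s, w i * f i ^ p :=
    Finset.sum_nonneg fun i _ ↦ mul_nonneg (hw i) (Real.rpow_nonneg (hf i) p)
  rw [← Real.le_rpow_inv_iff_of_pos (Finset.sum_nonneg fun i _ ↦ mul_nonneg (hw i) (hf i)) hWf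
    (by linarith)]
  calc ∑ i ∈ s, w i * f i
      ≤ (∑ i ∈ s, w i) ^ (1 - p⁻¹) * (∑ i ∈ s, w i * f i ^ p) ^ p⁻¹ :=
        Real.inner_le_weight_mul_Lp_of_nonneg s hp w f hw hf
    _ ≤ (∑ i ∈ s, w i * f i ^ p) ^ p⁻¹ :=
        mul_le_of_le_one_left (Real.rpow_nonneg hWf _)
          (Real.rpow_le_one (Finset.sum_nonneg fun i _ ↦ hw i) hw1
            (sub_nonneg.2 (inv_le_one_of_one_le₀ hp)))

namespace Matrix

lemma dotProduct_conjTranspose_mul_mul_mulVec {m n α : Type*} [Fintype m] [Fintype n]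
    [CommSemiring α] [StarRing α] (A : Matrix m m α) (B : Matrix m n α) (v : n → α) :
    star v ⬝ᵥ ((Bᴴ * A * B) *ᵥ v) = star (B *ᵥ v) ⬝ᵥ (A *ᵥ (B *ᵥ v)) := by
  rw [star_mulVec, ← dotProduct_mulVec, mulVec_mulVec, mulVec_mulVec, Matrix.mul_assoc]

variable {n 𝕜 : Type*} [RCLike 𝕜] [Fintype n]

lemma trace_eq_sum_dotProduct_mulVec {ι : Type*} [Fintype ι] (A : Matrix n n 𝕜)
    (e : OrthonormalBasis ι 𝕜 (EuclideanSpace 𝕜 n)) :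
    A.trace = ∑ i, star ⇑(e i) ⬝ᵥ (A *ᵥ ⇑(e i)) := by
  classical
  rw [← trace_toLin_eq A (PiLp.basisFun 2 𝕜 n), ← toLpLin_eq_toLin,
    LinearMap.trace_eq_sum_inner _ e]
  refine Finset.sum_congr rfl fun i _ ↦ ?_
  rw [EuclideanSpace.inner_eq_star_dotProduct, dotProduct_comm, ofLp_toLpLin, toLin'_apply]

variable [DecidableEq n] {A : Matrix n n 𝕜}

namespace IsHermitian

lemma cfc_mulVec_eigenvectorBasis (hA : A.IsHermitian) (f : ℝ → ℝ) (j : n) :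
    cfc f A *ᵥ ⇑(hA.eigenvectorBasis j) =
      (f (hA.eigenvalues j) : 𝕜) • ⇑(hA.eigenvectorBasis j) := by
  rw [hA.cfc_eq, IsHermitian.cfc, Unitary.conjStarAlgAut_apply, ← mulVec_mulVec, ← mulVec_mulVec,
    star_eigenvectorUnitary_mulVec, diagonal_mulVec_single, ← eigenvectorUnitary_mulVec]
  simp

lemma trace_cfc (hA : A.IsHermitian) (f : ℝ → ℝ) :
    (cfc f A).trace = ∑ i, (f (hA.eigenvalues i) : 𝕜) := by
  rw [hA.cfc_eq, IsHermitian.cfc, Unitary.conjStarAlgAut_apply, trace_mul_cycle,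
    Unitary.coe_star_mul_self, Matrix.one_mul, trace_diagonal]
  rfl

lemma dotProduct_cfc_mulVec (hA : A.IsHermitian) (f : ℝ → ℝ) (v : EuclideanSpace 𝕜 n) :
    star ⇑v ⬝ᵥ (cfc f A *ᵥ ⇑v) =
      ((∑ k, ‖⟪hA.eigenvectorBasis k, v⟫_𝕜‖ ^ 2 * f (hA.eigenvalues k) : ℝ) : 𝕜) := by
  have hv : ⇑v = ∑ k, ⟪hA.eigenvectorBasis k, v⟫_𝕜 • ⇑(hA.eigenvectorBasis k) := by
    conv_lhs => rw [← hA.eigenvectorBasis.sum_repr' v]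
    simp
  nth_rw 2 [hv]
  simp only [mulVec_sum, mulVec_smul, cfc_mulVec_eigenvectorBasis, dotProduct_sum, dotProduct_smul]
  push_cast
  refine Finset.sum_congr rfl fun k _ ↦ ?_
  rw [dotProduct_comm, ← EuclideanSpace.inner_eq_star_dotProduct, ← inner_conj_symm, smul_eq_mul,
    smul_eq_mul, RCLike.norm_conj, ← RCLike.conj_mul]
  ring

end IsHermitian

lemma PosSemidef.re_dotProduct_cfc_rpow_mulVec_rpow_inv_le {x : Matrix n n 𝕜} (hx : x.PosSemidef)
    {s : ℝ} (hs0 : 0 < s) (hs1 : s ≤ 1) (v : EuclideanSpace 𝕜 n) (hv : ‖v‖ ≤ 1) :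
    RCLike.re (star ⇑v ⬝ᵥ (cfc (fun t : ℝ ↦ t ^ s) x *ᵥ ⇑v)) ^ s⁻¹ ≤
      RCLike.re (star ⇑v ⬝ᵥ (x *ᵥ ⇑v)) := by
  have hquad_x := hx.1.dotProduct_cfc_mulVec (fun t ↦ t) v
  have hx_id : cfc (fun t : ℝ ↦ t) x = x := cfc_id' ℝ x hx.1
  rw [hx_id] at hquad_x
  rw [hquad_x, hx.1.dotProduct_cfc_mulVec, RCLike.ofReal_re, RCLike.ofReal_re]
  calc _ ≤ ∑ k, ‖⟪hx.1.eigenvectorBasis k, v⟫_𝕜‖ ^ 2 * (hx.1.eigenvalues k ^ s) ^ s⁻¹ :=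
        Real.rpow_sum_mul_le_sum_mul_rpow _ (one_le_inv₀ hs0 |>.2 hs1) (fun _ ↦ by positivity)
          (fun k ↦ Real.rpow_nonneg (hx.eigenvalues_nonneg k) s)
          ((hx.1.eigenvectorBasis.sum_sq_norm_inner_right v).trans_le
            (pow_le_one₀ (norm_nonneg v) hv))
    _ = _ := by simp only [Real.rpow_rpow_inv (hx.eigenvalues_nonneg _) hs0.ne']

end Matrix

theorem jensen_trace_inequality (θ : ℝ) (hθ0 : 0 < θ) (hθ1 : θ ≤ 1 / 2)
    (n : ℕ) (x b : Matrix (Fin n) (Fin n) ℂ) (hx : x.PosSemidef) (hb : opNorm b ≤ 1) :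
    ((matPow (bᴴ * matPow x (2 * θ) * b) (1 / (2 * θ))).trace).re ≤
      ((bᴴ * x * b).trace).re := by
  have hM : (bᴴ * matPow x (2 * θ) * b).IsHermitian :=
    isHermitian_conjTranspose_mul_mul b (cfc_predicate _ x)
  rw [matPow, hM.trace_cfc, trace_eq_sum_dotProduct_mulVec _ hM.eigenvectorBasis,
    Complex.re_sum, Complex.re_sum, one_div]
  refine Finset.sum_le_sum fun i _ ↦ ?_
  have hbu : ‖toEuclideanCLM (𝕜 := ℂ) b (hM.eigenvectorBasis i)‖ ≤ 1 :=
    ((toEuclideanCLM (𝕜 := ℂ) b).le_of_opNorm_le_of_le hb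
      (hM.eigenvectorBasis.orthonormal.1 i).le).trans_eq (one_mul 1)
  have hJensen := hx.re_dotProduct_cfc_rpow_mulVec_rpow_inv_le (s := 2 * θ) (by linarith)
    (by linarith) _ hbu
  rw [ofLp_toEuclideanCLM] at hJensen
  rw [← RCLike.re_to_complex, RCLike.ofReal_re, hM.eigenvalues_eq,
    dotProduct_conjTranspose_mul_mul_mulVec, dotProduct_conjTranspose_mul_mul_mulVec]
  exact hJensen
end

section
/- Let (Ω, μ) be a measure space and 1 ≤ p, q < ∞. There exists a constant c > 0 depending only on p and q such that for all complex-valued functions f, g ∈ L_p(μ) with ‖f‖_p ≤ 1 and ‖g‖_p ≤ 1, the functions M(f) = f·|f|^{p/q − 1} and M(g) = g·|g|^{p/q − 1} (interpreted as 0 at points where the function vanishes) belong to L_q(μ) and satisfy ‖M(f) − M(g)‖_q ≤ c · ‖f − g‖_p^{min(p/q, 1)}. -/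
/-!
With `α = p / q`, the Mazur map `M x = ‖x‖ ^ (α - 1) • x` satisfies `‖M x‖ = ‖x‖ ^ α`. Splitting
`M x - M y = ‖x‖ ^ (α - 1) • (x - y) + (‖x‖ ^ (α - 1) - ‖y‖ ^ (α - 1)) • y` and bounding the second
term by the mean value theorem for `t ↦ t ^ (α - 1)` gives pointwise
`‖M x - M y‖ ≤ 3 ‖x - y‖ ^ α` for `α ≤ 1` and `‖M x - M y‖ ≤ α (‖x‖ + ‖y‖) ^ (α - 1) ‖x - y‖`
for `α ≥ 1`. The first integrates directly to the `α`-Hölder bound. For the second, Hölder's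
inequality with `1 / q = (α - 1) / p + 1 / p` bounds the `L_q` norm by
`α ‖|f| + |g|‖_p ^ (α - 1) ‖f - g‖_p`, which is at most `α 2 ^ (α - 1) ‖f - g‖_p` on the unit ball.
-/

open MeasureTheory Real

lemma mul_abs_rpow_sub_rpow_le {a b s : ℝ} (hb : 0 ≤ b) (hba : b ≤ a) :
    b * |a ^ s - b ^ s| ≤ |s| * max (a ^ s) (b ^ s) * (a - b) := by
  rcases hb.eq_or_lt with rfl | hb
  · have : 0 ≤ max (a ^ s) (0 ^ s) := le_max_of_le_left (rpow_nonneg hba s)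
    simp only [zero_mul, sub_zero]
    positivity
  rcases hba.eq_or_lt with rfl | hba
  · simp
  have hderiv : ∀ x ∈ Set.Icc b a, HasDerivAt (· ^ s) (s * x ^ (s - 1)) x := fun x hx =>
    hasDerivAt_rpow_const (Or.inl (hb.trans_le hx.1).ne')
  obtain ⟨c, ⟨hbc, hca⟩, hc⟩ := exists_hasDerivAt_eq_slope (· ^ s) (fun x => s * x ^ (s - 1)) hba
    (fun x hx => (hderiv x hx).continuousAt.continuousWithinAt)
    (fun x hx => hderiv x (Set.Ioo_subset_Icc_self hx))
  have hc0 : 0 < c := hb.trans hbc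
  have hmvt : a ^ s - b ^ s = s * c ^ (s - 1) * (a - b) := by
    rw [hc, div_mul_cancel₀ _ (sub_pos.2 hba).ne']
  have hmul : b * c ^ (s - 1) ≤ c ^ s := by
    calc b * c ^ (s - 1) ≤ c * c ^ (s - 1) := by gcongr
      _ = c ^ s := by rw [rpow_sub_one hc0.ne', mul_div_cancel₀ _ hc0.ne']
  have hcmax : c ^ s ≤ max (a ^ s) (b ^ s) := by
    rcases le_total 0 s with hs | hs
    · exact le_max_of_le_left (rpow_le_rpow hc0.le hca.le hs)
    · exact le_max_of_le_right (rpow_le_rpow_of_nonpos hb hbc.le hs)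
  calc b * |a ^ s - b ^ s| = |s| * (b * c ^ (s - 1)) * (a - b) := by
        rw [hmvt, abs_mul, abs_mul, abs_of_pos (rpow_pos_of_pos hc0 _),
          abs_of_pos (sub_pos.2 hba)]
        ring
    _ ≤ |s| * max (a ^ s) (b ^ s) * (a - b) := by
        gcongr
        exact hmul.trans hcmax

lemma mul_rpow_le_rpow_add_one {d x s : ℝ} (hd : 0 < d) (hdx : d ≤ x) (hs : s ≤ 0) :
    d * x ^ s ≤ d ^ (s + 1) := by
  rw [rpow_add_one hd.ne', mul_comm d]
  exact mul_le_mul_of_nonneg_right (rpow_le_rpow_of_nonpos hd hdx hs) hd.le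

section Mazur

variable {E : Type*} [NormedAddCommGroup E] [NormedSpace ℝ E]

/-- At `x = 0` this is `0`, whatever the junk value of `0 ^ (α - 1)`. -/
noncomputable def mazurMap (α : ℝ) (x : E) : E := ‖x‖ ^ (α - 1) • x

lemma norm_mazurMap {α : ℝ} (hα : 0 < α) (x : E) : ‖mazurMap α x‖ = ‖x‖ ^ α := by
  rcases eq_or_ne x 0 with rfl | hx
  · simp [mazurMap, zero_rpow hα.ne']
  rw [mazurMap, norm_smul, norm_of_nonneg (by positivity), rpow_sub_one (norm_ne_zero_iff.2 hx),
    div_mul_cancel₀ _ (norm_ne_zero_iff.2 hx)]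

lemma norm_mazurMap_sub_le (α : ℝ) (x y : E) :
    ‖mazurMap α x - mazurMap α y‖ ≤
      ‖x - y‖ * ‖x‖ ^ (α - 1) + ‖y‖ * |‖x‖ ^ (α - 1) - ‖y‖ ^ (α - 1)| := by
  have hsplit : mazurMap α x - mazurMap α y =
      ‖x‖ ^ (α - 1) • (x - y) + (‖x‖ ^ (α - 1) - ‖y‖ ^ (α - 1)) • y := by
    simp only [mazurMap, smul_sub, sub_smul]
    abel
  rw [hsplit]
  refine (norm_add_le _ _).trans_eq ?_
  rw [norm_smul, norm_smul, norm_of_nonneg (by positivity), Real.norm_eq_abs, mul_comm,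
    mul_comm |_|]

lemma norm_mazurMap_sub_le_rpow {α : ℝ} (hα0 : 0 < α) (hα1 : α ≤ 1) (x y : E) :
    ‖mazurMap α x - mazurMap α y‖ ≤ 3 * ‖x - y‖ ^ α := by
  wlog hyx : ‖y‖ ≤ ‖x‖ generalizing x y
  · rw [norm_sub_rev, norm_sub_rev x]
    exact this y x (le_of_not_ge hyx)
  rcases eq_or_ne x y with rfl | hxy
  · simp [zero_rpow hα0.ne']
  set d := ‖x - y‖
  have hd : 0 < d := norm_pos_iff.2 (sub_ne_zero.2 hxy)
  rcases le_or_gt ‖y‖ d with hyd | hdy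
  · have hxd : ‖x‖ ^ α ≤ 2 * d ^ α := calc
      ‖x‖ ^ α ≤ (‖y‖ + d) ^ α := by gcongr; exact norm_le_norm_add_norm_sub' x y
      _ ≤ ‖y‖ ^ α + d ^ α := rpow_add_le_add_rpow (norm_nonneg y) (norm_nonneg _) hα0.le hα1
      _ ≤ 2 * d ^ α := by linarith [rpow_le_rpow (norm_nonneg y) hyd hα0.le]
    calc ‖mazurMap α x - mazurMap α y‖ ≤ ‖x‖ ^ α + ‖y‖ ^ α := by
          simpa only [norm_mazurMap hα0] using norm_sub_le (mazurMap α x) (mazurMap α y)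
      _ ≤ 3 * d ^ α := by linarith [rpow_le_rpow (norm_nonneg y) hyd hα0.le]
  · have hs : α - 1 ≤ 0 := by linarith
    have hsub : ‖x‖ - ‖y‖ ≤ d := norm_sub_norm_le x y
    have hsecond : ‖y‖ * |‖x‖ ^ (α - 1) - ‖y‖ ^ (α - 1)| ≤ d ^ α := calc
      _ ≤ |α - 1| * max (‖x‖ ^ (α - 1)) (‖y‖ ^ (α - 1)) * (‖x‖ - ‖y‖) :=
          mul_abs_rpow_sub_rpow_le (norm_nonneg y) hyx
      _ ≤ d * ‖y‖ ^ (α - 1) := by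
          rw [max_eq_right (rpow_le_rpow_of_nonpos (hd.trans hdy) hyx hs), abs_of_nonpos hs]
          calc -(α - 1) * ‖y‖ ^ (α - 1) * (‖x‖ - ‖y‖) ≤ 1 * ‖y‖ ^ (α - 1) * d := by
                gcongr
                linarith
            _ = d * ‖y‖ ^ (α - 1) := by ring
      _ ≤ d ^ α := by simpa only [sub_add_cancel] using mul_rpow_le_rpow_add_one hd hdy.le hs
    calc ‖mazurMap α x - mazurMap α y‖
        ≤ d * ‖x‖ ^ (α - 1) + ‖y‖ * |‖x‖ ^ (α - 1) - ‖y‖ ^ (α - 1)| := norm_mazurMap_sub_le α x y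
      _ ≤ d ^ α + d ^ α := by
          gcongr
          simpa only [sub_add_cancel] using mul_rpow_le_rpow_add_one hd (hdy.le.trans hyx) hs
      _ ≤ 3 * d ^ α := by linarith [rpow_nonneg hd.le α]

lemma norm_mazurMap_sub_le_mul {α : ℝ} (hα : 1 ≤ α) (x y : E) :
    ‖mazurMap α x - mazurMap α y‖ ≤ α * ((‖x‖ + ‖y‖) ^ (α - 1) * ‖x - y‖) := by
  wlog hyx : ‖y‖ ≤ ‖x‖ generalizing x y
  · rw [norm_sub_rev, norm_sub_rev x, add_comm]
    exact this y x (le_of_not_ge hyx)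
  have hs : 0 ≤ α - 1 := by linarith
  have hsub : ‖x‖ - ‖y‖ ≤ ‖x - y‖ := norm_sub_norm_le x y
  have hsecond : ‖y‖ * |‖x‖ ^ (α - 1) - ‖y‖ ^ (α - 1)| ≤ (α - 1) * ‖x‖ ^ (α - 1) * ‖x - y‖ := calc
    _ ≤ |α - 1| * max (‖x‖ ^ (α - 1)) (‖y‖ ^ (α - 1)) * (‖x‖ - ‖y‖) :=
        mul_abs_rpow_sub_rpow_le (norm_nonneg y) hyx
    _ ≤ (α - 1) * ‖x‖ ^ (α - 1) * ‖x - y‖ := by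
        rw [max_eq_left (rpow_le_rpow (norm_nonneg y) hyx hs), abs_of_nonneg hs]
        gcongr
  calc ‖mazurMap α x - mazurMap α y‖
      ≤ ‖x - y‖ * ‖x‖ ^ (α - 1) + ‖y‖ * |‖x‖ ^ (α - 1) - ‖y‖ ^ (α - 1)| :=
        norm_mazurMap_sub_le α x y
    _ ≤ α * (‖x‖ ^ (α - 1) * ‖x - y‖) := by linarith
    _ ≤ α * ((‖x‖ + ‖y‖) ^ (α - 1) * ‖x - y‖) := by
        gcongr
        linarith [norm_nonneg y]

variable {Ω : Type*} [MeasurableSpace Ω] {μ : Measure Ω}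

lemma MeasureTheory.AEStronglyMeasurable.mazurMap (α : ℝ) {f : Ω → E}
    (hf : AEStronglyMeasurable f μ) :
    AEStronglyMeasurable (fun ω => mazurMap α (f ω)) μ :=
  (hf.norm.aemeasurable.pow_const _).aestronglyMeasurable.smul hf

lemma eLpNorm_mazurMap {α : ℝ} (hα : 0 < α) (f : Ω → E) (r : ENNReal) :
    eLpNorm (fun ω => mazurMap α (f ω)) r μ = eLpNorm f (r * ENNReal.ofReal α) μ ^ α := by
  rw [← eLpNorm_norm_rpow f hα]
  exact eLpNorm_congr_norm_ae (.of_forall fun ω => by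
    rw [norm_mazurMap hα, norm_of_nonneg (by positivity)])

lemma MeasureTheory.MemLp.mazurMap {p q : ℝ} (hp : 0 < p) (hq : 0 < q) {f : Ω → E}
    (hf : MemLp f (ENNReal.ofReal p) μ) :
    MemLp (fun ω => mazurMap (p / q) (f ω)) (ENNReal.ofReal q) μ := by
  refine ⟨hf.1.mazurMap _, ?_⟩
  rw [eLpNorm_mazurMap (div_pos hp hq), ← ENNReal.ofReal_mul hq.le, mul_div_cancel₀ _ hq.ne']
  exact ENNReal.rpow_lt_top_of_nonneg (div_pos hp hq).le hf.2.ne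

lemma eLpNorm_mazurMap_sub_le_rpow {p q : ℝ} (hp : 0 < p) (hpq : p ≤ q) (f g : Ω → E) :
    eLpNorm ((fun ω => mazurMap (p / q) (f ω)) - fun ω => mazurMap (p / q) (g ω))
        (ENNReal.ofReal q) μ ≤
      ENNReal.ofReal 3 * eLpNorm (f - g) (ENNReal.ofReal p) μ ^ (p / q) := by
  have hq : 0 < q := hp.trans_le hpq
  have hα : 0 < p / q := div_pos hp hq
  calc _ ≤ ENNReal.ofReal 3 * eLpNorm (fun ω => ‖(f - g) ω‖ ^ (p / q)) (ENNReal.ofReal q) μ :=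
        eLpNorm_le_mul_eLpNorm_of_ae_le_mul (.of_forall fun ω => by
          rw [norm_of_nonneg (by positivity)]
          exact norm_mazurMap_sub_le_rpow hα ((div_le_one hq).2 hpq) (f ω) (g ω)) _
    _ = ENNReal.ofReal 3 * eLpNorm (f - g) (ENNReal.ofReal p) μ ^ (p / q) := by
        rw [eLpNorm_norm_rpow _ hα, ← ENNReal.ofReal_mul hq.le, mul_div_cancel₀ _ hq.ne']

lemma eLpNorm_mazurMap_sub_le_mul {p q : ℝ} (hp : 1 ≤ p) (hq : 0 < q) (hqp : q < p) {f g : Ω → E}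
    (hf : AEStronglyMeasurable f μ) (hg : AEStronglyMeasurable g μ) :
    eLpNorm ((fun ω => mazurMap (p / q) (f ω)) - fun ω => mazurMap (p / q) (g ω))
        (ENNReal.ofReal q) μ ≤
      ENNReal.ofReal (p / q) *
        (eLpNorm f (ENNReal.ofReal p) μ + eLpNorm g (ENNReal.ofReal p) μ) ^ (p / q - 1) *
          eLpNorm (f - g) (ENNReal.ofReal p) μ := by
  set α := p / q
  have hα : 1 < α := (one_lt_div hq).2 hqp
  have hs : 0 < α - 1 := by linarith
  set r := p / (α - 1)
  have hr : 0 < r := div_pos (by linarith) hs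
  have : ENNReal.HolderTriple (ENNReal.ofReal r) (ENNReal.ofReal p) (ENNReal.ofReal q) := by
    constructor
    rw [← ENNReal.ofReal_inv_of_pos hr, ← ENNReal.ofReal_inv_of_pos (by linarith),
      ← ENNReal.ofReal_inv_of_pos hq, ← ENNReal.ofReal_add (by positivity) (by positivity)]
    congr 1
    simp only [r, α]
    field_simp
    ring
  have hrp : ENNReal.ofReal r * ENNReal.ofReal (α - 1) = ENNReal.ofReal p := by
    rw [← ENNReal.ofReal_mul hr.le, div_mul_cancel₀ _ hs.ne']
  set K : Ω → ℝ := fun ω => (‖f ω‖ + ‖g ω‖) ^ (α - 1)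
  have hK : eLpNorm K (ENNReal.ofReal r) μ ≤
      (eLpNorm f (ENNReal.ofReal p) μ + eLpNorm g (ENNReal.ofReal p) μ) ^ (α - 1) := calc
    _ = eLpNorm (fun ω => ‖f ω‖ + ‖g ω‖) (ENNReal.ofReal p) μ ^ (α - 1) := by
        rw [← hrp, ← eLpNorm_norm_rpow _ hs]
        exact eLpNorm_congr_norm_ae (.of_forall fun ω => by
          rw [norm_of_nonneg (by positivity : 0 ≤ ‖f ω‖ + ‖g ω‖)])
    _ ≤ _ := by
        gcongr
        have := eLpNorm_add_le hf.norm hg.norm (ENNReal.one_le_ofReal.2 hp)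
        rwa [eLpNorm_norm, eLpNorm_norm] at this
  calc _ ≤ ENNReal.ofReal α * eLpNorm (K • (f - g)) (ENNReal.ofReal q) μ :=
        eLpNorm_le_mul_eLpNorm_of_ae_le_mul (.of_forall fun ω => by
          simp only [Pi.sub_apply, Pi.smul_apply', norm_smul]
          rw [norm_of_nonneg (by positivity)]
          exact norm_mazurMap_sub_le_mul hα.le (f ω) (g ω)) _
    _ ≤ ENNReal.ofReal α *
          (eLpNorm K (ENNReal.ofReal r) μ * eLpNorm (f - g) (ENNReal.ofReal p) μ) := by
        gcongr
        exact eLpNorm_smul_le_mul_eLpNorm (hf.sub hg)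
          ((hf.norm.add hg.norm).aemeasurable.pow_const _).aestronglyMeasurable
    _ ≤ _ := by
        rw [← mul_assoc]
        gcongr

end Mazur

lemma mazurMap_eq_mul_ofReal (α : ℝ) (z : ℂ) : mazurMap α z = z * ((‖z‖ ^ (α - 1) : ℝ) : ℂ) := by
  rw [mazurMap, Complex.real_smul, mul_comm]

lemma ENNReal.toReal_le_mul_rpow_of_le_ofReal_mul {x y : ENNReal} {c e : ℝ} (hc : 0 ≤ c)
    (he : 0 ≤ e) (hy : y ≠ ⊤) (h : x ≤ ENNReal.ofReal c * y ^ e) :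
    x.toReal ≤ c * y.toReal ^ e := by
  have := ENNReal.toReal_mono
    (ENNReal.mul_ne_top ENNReal.ofReal_ne_top (ENNReal.rpow_ne_top_of_nonneg he hy)) h
  rwa [ENNReal.toReal_mul, ENNReal.toReal_ofReal hc, ← ENNReal.toReal_rpow] at this

theorem mazur_holder_commutative {Ω : Type*} [MeasurableSpace Ω] (μ : Measure Ω)
    (p q : ℝ) (hp : 1 ≤ p) (hq : 1 ≤ q) :
    ∃ c > (0 : ℝ), ∀ f g : Ω → ℂ,
      MemLp f (ENNReal.ofReal p) μ → MemLp g (ENNReal.ofReal p) μ →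
      eLpNorm f (ENNReal.ofReal p) μ ≤ 1 → eLpNorm g (ENNReal.ofReal p) μ ≤ 1 →
      MemLp (fun ω => f ω * ((‖f ω‖ ^ (p / q - 1) : ℝ) : ℂ))
        (ENNReal.ofReal q) μ ∧
      MemLp (fun ω => g ω * ((‖g ω‖ ^ (p / q - 1) : ℝ) : ℂ))
        (ENNReal.ofReal q) μ ∧
      (eLpNorm ((fun ω => f ω * ((‖f ω‖ ^ (p / q - 1) : ℝ) : ℂ)) -
          (fun ω => g ω * ((‖g ω‖ ^ (p / q - 1) : ℝ) : ℂ)))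
        (ENNReal.ofReal q) μ).toReal ≤
        c * (eLpNorm (f - g) (ENNReal.ofReal p) μ).toReal ^ min (p / q) 1 := by
  have hp0 : 0 < p := by linarith
  have hq0 : 0 < q := by linarith
  simp only [← mazurMap_eq_mul_ofReal]
  rcases le_or_gt p q with hpq | hqp
  · refine ⟨3, by norm_num, fun f g hf hg _ _ => ⟨hf.mazurMap hp0 hq0, hg.mazurMap hp0 hq0, ?_⟩⟩
    rw [min_eq_left ((div_le_one hq0).2 hpq)]
    exact ENNReal.toReal_le_mul_rpow_of_le_ofReal_mul (by norm_num) (by positivity)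
      (hf.sub hg).2.ne (eLpNorm_mazurMap_sub_le_rpow hp0 hpq f g)
  · refine ⟨p / q * 2 ^ (p / q - 1), by positivity, fun f g hf hg hf1 hg1 =>
      ⟨hf.mazurMap hp0 hq0, hg.mazurMap hp0 hq0, ?_⟩⟩
    have hs : 0 ≤ p / q - 1 := by linarith [(one_lt_div hq0).2 hqp]
    rw [min_eq_right (by linarith)]
    refine ENNReal.toReal_le_mul_rpow_of_le_ofReal_mul (by positivity) zero_le_one
      (hf.sub hg).2.ne ?_
    calc _ ≤ ENNReal.ofReal (p / q) *
          (eLpNorm f (ENNReal.ofReal p) μ + eLpNorm g (ENNReal.ofReal p) μ) ^ (p / q - 1) *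
            eLpNorm (f - g) (ENNReal.ofReal p) μ :=
          eLpNorm_mazurMap_sub_le_mul hp hq0 hqp hf.1 hg.1
      _ ≤ ENNReal.ofReal (p / q) * 2 ^ (p / q - 1) * eLpNorm (f - g) (ENNReal.ofReal p) μ := by
          gcongr
          exact (add_le_add hf1 hg1).trans_eq one_add_one_eq_two
      _ = _ := by
          rw [ENNReal.rpow_one, ENNReal.ofReal_mul (by positivity),
            ← ENNReal.ofReal_rpow_of_nonneg zero_le_two hs, ENNReal.ofReal_ofNat]
end
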